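/- Let k ≥ 1 and c ∈ ℕ, and consider the one-counter parity game with states u_0,…,u_{k−1} arranged in a cycle with weight −1 edges u_{k−1}→u_{k−2}→…→u_0→u_{k−1}, where each state has a weight-0 self-loop, the state u_{k−1} is owned by Falsifier and has color 0, and every other state u_j is owned by Verifier and has color 1. Then for every i ∈ ℕ, Verifier has a winning strategy from the configuration (u_{(c−1) mod k}, i) if and only if i ≡ c (mod k). -/
import Mathlib


namespace OneCounter

abbrev Config (S : Type) := S × ℕ

/-- A maximal (finite or infinite) play over a step relation, represented as a
function `ℕ → Option C` that is `some` on an initial segment. -/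
structure PlayOn {C : Type} (step : C → C → Prop) where
  f : ℕ → Option C
  start : (f 0).isSome
  succ : ∀ n c', f (n+1) = some c' → ∃ c, f n = some c ∧ step c c'
  maximal : ∀ n c, f n = some c → f (n+1) = none → ∀ c', ¬ step c c'

/-- The history after `n` steps, most recent configuration first. -/
def hist {C : Type} (f : ℕ → Option C) (n : ℕ) : List C :=
  ((List.range (n+1)).reverse).filterMap f

/-- A strategy for the player owning the configurations satisfying `mine`:
a partial function from histories (most recent configuration first) to
configurations, prescribing only legal moves and defined whenever a move
is available. -/
structure StrategyOn {C : Type} (step : C → C → Prop) (mine : C → Prop) where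
  act : List C → Option C
  legal : ∀ h c c', act (c :: h) = some c' → step c c'
  total : ∀ h c, mine c → (∃ c', step c c') → (act (c :: h)).isSome

/-- A play is compatible with a strategy if at every position owned by the
strategy's player, the next configuration is the prescribed one. -/
def Compat {C : Type} {step : C → C → Prop} {mine : C → Prop}
    (σ : StrategyOn step mine) (ρ : PlayOn step) : Prop :=
  ∀ n c, ρ.f n = some c → mine c → ρ.f (n+1) = σ.act (hist ρ.f n)

/-- A one-counter parity game: two players `Verifier` (`true`) and
`Falsifier` (`false`); every state has an owner and a color. -/
structure OCPG (S : Type) where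
  owner : S → Bool
  trans : S → ℤ → S → Prop
  color : S → ℕ

namespace OCPG

variable {S : Type} (G : OCPG S)

/-- One step between configurations: a transition whose weight matches the
counter difference (the counter, being a natural number, never goes below 0). -/
def Step (c c' : Config S) : Prop := G.trans c.1 ((c'.2 : ℤ) - (c.2 : ℤ)) c'.1

/-- All edge weights lie in `{-1, 0, +1}`. -/
def SmallWeights : Prop := ∀ s v s', G.trans s v s' → v = -1 ∨ v = 0 ∨ v = 1

/-- Color `k` occurs infinitely often along the play. -/
def InfOcc (ρ : PlayOn G.Step) (k : ℕ) : Prop :=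
  ∀ N, ∃ n, N ≤ n ∧ ∃ c, ρ.f n = some c ∧ G.color c.1 = k

/-- The least color occurring infinitely often exists and is even. -/
def VerifierWinsInf (ρ : PlayOn G.Step) : Prop :=
  ∃ k, G.InfOcc ρ k ∧ Even k ∧ ∀ k', G.InfOcc ρ k' → k ≤ k'

/-- Player `b` wins the play: a finite maximal play is lost by the owner of its
last configuration, and an infinite play is won by Verifier iff the least color
occurring infinitely often is even. -/
def WinsPlay (b : Bool) (ρ : PlayOn G.Step) : Prop :=
  (∃ n c, ρ.f n = some c ∧ ρ.f (n+1) = none ∧ G.owner c.1 ≠ b)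
  ∨ ((∀ n, (ρ.f n).isSome) ∧ (G.VerifierWinsInf ρ ↔ b = true))

/-- Player `b` has a winning strategy from configuration `c₀`. -/
def WinsFrom (b : Bool) (c₀ : Config S) : Prop :=
  ∃ σ : StrategyOn G.Step (fun c => G.owner c.1 = b),
    ∀ ρ : PlayOn G.Step, ρ.f 0 = some c₀ → Compat σ ρ → G.WinsPlay b ρ

end OCPG


/-- The gadget game for `r ≡ c (mod k)`: states `u_0, …, u_{k-1}` in a cycle of
weight −1 edges `u_{k-1} → u_{k-2} → … → u_0 → u_{k-1}`, each state with a
weight-0 self-loop; `u_{k-1}` is Falsifier-owned with color 0, every other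
state is Verifier-owned with color 1. -/
def modGadget (k : ℕ) (hk : 1 ≤ k) : OCPG (Fin k) where
  owner := fun x => if (x : ℕ) = k - 1 then false else true
  trans := fun x v y =>
    (x = y ∧ v = 0) ∨
    ((y : ℕ) + 1 = (x : ℕ) ∧ v = -1) ∨
    ((x : ℕ) = 0 ∧ (y : ℕ) = k - 1 ∧ v = -1)
  color := fun x => if (x : ℕ) = k - 1 then 0 else 1

section Aux

variable {k : ℕ} (hk : 1 ≤ k)

/-- The next state down the cycle. -/
def down (x : Fin k) : Fin k :=
  if h : (x : ℕ) = 0 then ⟨k - 1, by omega⟩ else ⟨(x : ℕ) - 1, by omega⟩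

/-- The canonical move: move down the cycle if the counter is positive,
otherwise self-loop. -/
def vmove (p : Config (Fin k)) : Config (Fin k) :=
  if p.2 = 0 then p else (down hk p.1, p.2 - 1)

lemma step_self (p : Config (Fin k)) : (modGadget k hk).Step p p :=
  Or.inl ⟨rfl, by ring⟩

lemma step_vmove (p : Config (Fin k)) :
    (modGadget k hk).Step p (vmove hk p) := by
  unfold vmove
  split
  · exact step_self hk p
  · rename_i hp
    show (modGadget k hk).trans p.1 _ _
    have hc : ((p.2 - 1 : ℕ) : ℤ) - (p.2 : ℤ) = -1 := by omega
    unfold down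
    split
    · rename_i h0
      exact Or.inr (Or.inr ⟨h0, rfl, hc⟩)
    · rename_i h0
      refine Or.inr (Or.inl ⟨?_, hc⟩)
      show (p.1 : ℕ) - 1 + 1 = (p.1 : ℕ)
      omega

lemma vmove_fix {p : Config (Fin k)} (h : vmove hk p = p) : p.2 = 0 := by
  by_contra hp
  unfold vmove at h
  rw [if_neg hp] at h
  have : p.2 - 1 = p.2 := congrArg Prod.snd h
  omega

lemma step_counter_le {p q : Config (Fin k)}
    (h : (modGadget k hk).Step p q) : q.2 ≤ p.2 := by
  rcases h with ⟨_, h⟩ | ⟨_, h⟩ | ⟨_, _, h⟩ <;> omega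

lemma step_fix {p q : Config (Fin k)}
    (h : (modGadget k hk).Step p q) (he : q.2 = p.2) : q = p := by
  rcases h with ⟨h1, _⟩ | ⟨_, h⟩ | ⟨_, _, h⟩
  · exact Prod.ext h1.symm he
  · omega
  · omega

/-- The invariant: the "phase" `v - x - 1` is preserved modulo `k`. -/
lemma step_phi {p q : Config (Fin k)}
    (h : (modGadget k hk).Step p q) :
    ((q.2 : ℤ) - (q.1 : ℕ) - 1) ≡ ((p.2 : ℤ) - (p.1 : ℕ) - 1) [ZMOD (k : ℤ)] := by
  rcases h with ⟨h1, h2⟩ | ⟨h1, h2⟩ | ⟨h1, h2, h3⟩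
  · rw [h1]
    have : (q.2 : ℤ) = (p.2 : ℤ) := by omega
    rw [this]
  · have : ((q.2 : ℤ) - (q.1 : ℕ) - 1) = ((p.2 : ℤ) - (p.1 : ℕ) - 1) := by omega
    rw [this]
  · rw [Int.ModEq]
    have : ((p.2 : ℤ) - (p.1 : ℕ) - 1) = ((q.2 : ℤ) - (q.1 : ℕ) - 1) + k := by omega
    rw [this]
    rw [show ((q.2 : ℤ) - (q.1 : ℕ) - 1 + k) = ((q.2 : ℤ) - (q.1 : ℕ) - 1 + (k : ℤ) * 1) by ring,
      Int.add_mul_emod_self_left]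

/-- Every play in the gadget is total (infinite), since self-loops always exist. -/
lemma play_some (ρ : PlayOn (modGadget k hk).Step) :
    ∀ n, ∃ p, ρ.f n = some p := by
  intro n
  induction n with
  | zero => exact Option.isSome_iff_exists.mp ρ.start
  | succ n ih =>
    obtain ⟨p, hp⟩ := ih
    cases h : ρ.f (n+1) with
    | none => exact absurd (step_self hk p) (ρ.maximal n p hp h p)
    | some q => exact ⟨q, rfl⟩

/-- A non-increasing sequence of naturals stabilizes. -/
lemma stabilize (v : ℕ → ℕ) (h : ∀ n, v (n+1) ≤ v n) :
    ∃ N, ∀ n, N ≤ n → v n = v N := by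
  have mono : ∀ m n, m ≤ n → v n ≤ v m := by
    intro m n hmn
    induction hmn with
    | refl => exact le_refl _
    | step h' ih => exact le_trans (h _) ih
  have hne : (Set.range v).Nonempty := ⟨v 0, 0, rfl⟩
  obtain ⟨N, hN⟩ := Nat.sInf_mem hne
  refine ⟨N, fun n hn => le_antisymm (mono N n hn) ?_⟩
  rw [hN]
  exact Nat.sInf_le ⟨n, rfl⟩

lemma hist_zero {C : Type} (f : ℕ → Option C) (c : C) (h : f 0 = some c) :
    hist f 0 = [c] := by
  simp [hist, List.range_succ, h]

lemma hist_succ {C : Type} (f : ℕ → Option C) (n : ℕ) (c : C)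
    (h : f (n+1) = some c) : hist f (n+1) = c :: hist f n := by
  simp [hist, List.range_succ, h]

lemma hist_cons {C : Type} (f : ℕ → Option C) (n : ℕ) (c : C)
    (h : f n = some c) : ∃ t, hist f n = c :: t := by
  cases n with
  | zero => exact ⟨[], hist_zero f c h⟩
  | succ n => exact ⟨hist f n, hist_succ f n c h⟩

/-- Verifier's positional strategy: always move down the cycle when possible. -/
def posStrat : StrategyOn (modGadget k hk).Step
    (fun c => (modGadget k hk).owner c.1 = true) where
  act := fun l => l.head?.map (vmove hk)
  legal := by
    intro h c c' hac
    simp at hac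
    rw [← hac]
    exact step_vmove hk c
  total := by intro h c _ _; simp

/-- Falsifier's answer function against a Verifier strategy `σ`: follow `σ`
at Verifier nodes, play `vmove` at Falsifier nodes. -/
def fnxt (σ : StrategyOn (modGadget k hk).Step
    (fun c => (modGadget k hk).owner c.1 = true))
    (start : Config (Fin k)) : List (Config (Fin k)) → Config (Fin k)
  | [] => start
  | c :: t => if (modGadget k hk).owner c.1 = true
      then (σ.act (c :: t)).getD (vmove hk c) else vmove hk c

/-- The list of configurations (most recent first) of the play where Falsifier
answers `σ` with `fnxt`. -/
def followL (σ : StrategyOn (modGadget k hk).Step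
    (fun c => (modGadget k hk).owner c.1 = true))
    (start : Config (Fin k)) : ℕ → List (Config (Fin k))
  | 0 => [start]
  | n+1 => fnxt hk σ start (followL σ start n) :: followL σ start n

/-- The configuration sequence of that play. -/
def followC (σ : StrategyOn (modGadget k hk).Step
    (fun c => (modGadget k hk).owner c.1 = true))
    (start : Config (Fin k)) : ℕ → Config (Fin k)
  | 0 => start
  | n+1 => fnxt hk σ start (followL hk σ start n)

lemma followL_head (σ) (start : Config (Fin k)) (n : ℕ) :
    ∃ t, followL hk σ start n = followC hk σ start n :: t := by
  cases n with
  | zero => exact ⟨[], rfl⟩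
  | succ n => exact ⟨followL hk σ start n, rfl⟩

set_option maxHeartbeats 1000000 in
theorem modGadget_aux (k : ℕ) (hk : 1 ≤ k) (c i : ℕ) (x0 : Fin k)
    (hx0 : ((x0 : ℕ) : ℤ) = ((c : ℤ) - 1) % (k : ℤ)) :
    (modGadget k hk).WinsFrom true (x0, i) ↔ i ≡ c [MOD k] := by
  have hkz : ((k : ℤ)) ≠ 0 := by exact_mod_cast Nat.one_le_iff_ne_zero.mp hk
  -- the phase of the start configuration is `i - c` mod `k`
  have hphase0 : ((i : ℤ) - ((x0 : ℕ) : ℤ) - 1) ≡ (i : ℤ) - (c : ℤ) [ZMOD (k : ℤ)] := by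
    have hmod1 : ((c : ℤ) - 1) % k ≡ (c : ℤ) - 1 [ZMOD (k : ℤ)] :=
      Int.emod_emod_of_dvd _ dvd_rfl
    have hb : (i : ℤ) - (((c : ℤ) - 1) % k) - 1 ≡ (i : ℤ) - ((c : ℤ) - 1) - 1 [ZMOD (k : ℤ)] :=
      ((Int.ModEq.refl _).sub hmod1).sub (Int.ModEq.refl _)
    rw [hx0]
    have he : (i : ℤ) - ((c : ℤ) - 1) - 1 = (i : ℤ) - c := by ring
    rwa [he] at hb
  constructor
  · -- winning implies the congruence
    rintro ⟨σ, hwin⟩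
    by_contra hne
    -- Falsifier's answer play
    set g : ℕ → Config (Fin k) := followC hk σ (x0, i) with hg
    set L : ℕ → List (Config (Fin k)) := followL hk σ (x0, i) with hL
    have key : ∀ n, ((modGadget k hk).owner (g n).1 = true →
        σ.act (L n) = some (g (n+1))) ∧ (modGadget k hk).Step (g n) (g (n+1)) := by
      intro n
      obtain ⟨t, ht⟩ := followL_head hk σ (x0, i) n
      rw [← hL, ← hg] at ht
      have hg1 : g (n+1) = fnxt hk σ (x0, i) (L n) := rfl
      by_cases ho : (modGadget k hk).owner (g n).1 = true
      · have hsome := σ.total t (g n) ho ⟨g n, step_self hk _⟩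
        obtain ⟨q, hq⟩ := Option.isSome_iff_exists.mp hsome
        have hfn : fnxt hk σ (x0, i) (L n) = q := by
          rw [ht]
          simp only [fnxt]
          rw [if_pos ho, hq]
          rfl
        constructor
        · intro _
          rw [hg1, hfn, ht, hq]
        · rw [hg1, hfn]
          exact σ.legal t (g n) q hq
      · have hfn : fnxt hk σ (x0, i) (L n) = vmove hk (g n) := by
          rw [ht]
          simp only [fnxt]
          rw [if_neg ho]
        constructor
        · intro h
          exact absurd h ho
        · rw [hg1, hfn]
          exact step_vmove hk (g n)
    -- the resulting play
    let ρ : PlayOn (modGadget k hk).Step :=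
      { f := fun n => some (g n)
        start := rfl
        succ := fun n c' h => ⟨g n, rfl, by
          have : g (n+1) = c' := Option.some.inj h
          exact this ▸ (key n).2⟩
        maximal := fun n p _ h => absurd h (by simp) }
    have hρf : ∀ n, ρ.f n = some (g n) := fun _ => rfl
    have histL : ∀ n, hist ρ.f n = L n := by
      intro n
      induction n with
      | zero => exact hist_zero ρ.f (g 0) (hρf 0)
      | succ n ih =>
        rw [hist_succ ρ.f n (g (n+1)) (hρf (n+1)), ih]
        rfl
    have hcompat : Compat σ ρ := by
      intro n p hp hmine
      rw [hρf n] at hp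
      have hpg : p = g n := (Option.some.inj hp).symm
      rw [histL n, hρf (n+1)]
      exact ((key n).1 (hpg ▸ hmine)).symm
    have hwp := hwin ρ (hρf 0) hcompat
    rcases hwp with ⟨n, p, _, hnone, _⟩ | ⟨_, hiff⟩
    · rw [hρf (n+1)] at hnone
      exact absurd hnone (by simp)
    obtain ⟨m, hm, heven, _⟩ := hiff.mpr rfl
    -- the even color occurring infinitely often must be 0
    have hm0 : m = 0 := by
      obtain ⟨n, _, p, _, hcol⟩ := hm 0
      have : m = 0 ∨ m = 1 := by
        unfold modGadget at hcol
        dsimp at hcol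
        split at hcol <;> omega
      rcases this with h | h
      · exact h
      · rw [h] at heven
        exact absurd heven (by decide)
    subst hm0
    -- the play stabilizes
    obtain ⟨N, hN⟩ := stabilize (fun n => (g n).2)
      (fun n => step_counter_le hk (key n).2)
    have hstab : ∀ n, N ≤ n → g n = g N := by
      intro n hn
      induction n, hn using Nat.le_induction with
      | base => rfl
      | succ n hn ih =>
        rw [← ih]
        refine step_fix hk (key n).2 ?_
        have h1 := hN (n+1) (by omega)
        have h2 := hN n hn
        simpa [h2] using h1
    -- the stable state is `u_{k-1}` with counter 0
    obtain ⟨n, hnN, p, hp, hcol⟩ := hm N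
    rw [hρf n] at hp
    have hpg : p = g n := (Option.some.inj hp).symm
    have hcol' : ((g n).1 : ℕ) = k - 1 := by
      rw [hpg] at hcol
      unfold modGadget at hcol
      dsimp at hcol
      split at hcol
      · assumption
      · omega
    have hs1 : ((g N).1 : ℕ) = k - 1 := by rw [← hstab n hnN]; exact hcol'
    have howner : (modGadget k hk).owner (g N).1 = false := by
      unfold modGadget
      dsimp
      rw [if_pos hs1]
    have hgN1 : g (N+1) = vmove hk (g N) := by
      obtain ⟨t, ht⟩ := followL_head hk σ (x0, i) N
      rw [← hL, ← hg] at ht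
      show fnxt hk σ (x0, i) (L N) = vmove hk (g N)
      rw [ht]
      simp only [fnxt]
      rw [if_neg (by rw [howner]; simp)]
    have hs2 : (g N).2 = 0 := by
      refine vmove_fix hk ?_
      rw [← hgN1]
      exact hstab (N+1) (by omega)
    -- invariant gives the congruence, contradiction
    have hphi : ∀ n, (((g n).2 : ℤ) - ((g n).1 : ℕ) - 1) ≡
        (i : ℤ) - (c : ℤ) [ZMOD (k : ℤ)] := by
      intro n
      induction n with
      | zero => exact hphase0
      | succ n ih => exact (step_phi hk (key n).2).trans ih
    have hdvd := (hphi N).dvd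
    have heq : ((i : ℤ) - c) - (((g N).2 : ℤ) - ((g N).1 : ℕ) - 1) =
        ((i : ℤ) - c) + k := by
      rw [hs2, hs1]
      push_cast [hk]
      ring
    rw [heq] at hdvd
    have : (k : ℤ) ∣ (c : ℤ) - (i : ℤ) := by
      have h1 : (k : ℤ) ∣ ((i : ℤ) - c) + k - k := dvd_sub hdvd dvd_rfl
      have h2 : ((i : ℤ) - c) + k - k = -((c : ℤ) - i) := by ring
      rw [h2] at h1
      exact dvd_neg.mp h1
    exact hne (Nat.modEq_iff_dvd.mpr this)
  · -- the congruence implies winning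
    intro hmod
    refine ⟨posStrat hk, ?_⟩
    intro ρ h0 hcompat
    choose ch hch using play_some hk ρ
    have hch0 : ch 0 = (x0, i) := by
      have := hch 0
      rw [h0] at this
      exact (Option.some.inj this).symm
    have hstep : ∀ n, (modGadget k hk).Step (ch n) (ch (n+1)) := by
      intro n
      obtain ⟨p, hp, hs⟩ := ρ.succ n _ (hch (n+1))
      rw [hch n] at hp
      rwa [Option.some.inj hp]
    have hphi : ∀ n, (((ch n).2 : ℤ) - ((ch n).1 : ℕ) - 1) ≡
        (i : ℤ) - (c : ℤ) [ZMOD (k : ℤ)] := by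
      intro n
      induction n with
      | zero => rw [hch0]; exact hphase0
      | succ n ih => exact (step_phi hk (hstep n)).trans ih
    obtain ⟨N, hN⟩ := stabilize (fun n => (ch n).2)
      (fun n => step_counter_le hk (hstep n))
    have hstab : ∀ n, N ≤ n → ch n = ch N := by
      intro n hn
      induction n, hn using Nat.le_induction with
      | base => rfl
      | succ n hn ih =>
        rw [← ih]
        refine step_fix hk (hstep n) ?_
        have h1 := hN (n+1) (by omega)
        have h2 := hN n hn
        simpa [h2] using h1
    -- the stable state must be `u_{k-1}`
    have hs1 : ((ch N).1 : ℕ) = k - 1 := by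
      by_contra hcase
      have hmine : (modGadget k hk).owner (ch N).1 = true := by
        unfold modGadget
        dsimp
        rw [if_neg hcase]
      have hc := hcompat N (ch N) (hch N) hmine
      obtain ⟨t, ht⟩ := hist_cons ρ.f N (ch N) (hch N)
      rw [ht] at hc
      have hact : (posStrat hk).act ((ch N) :: t) = some (vmove hk (ch N)) := by
        simp [posStrat]
      rw [hact, hch (N+1)] at hc
      have hv : vmove hk (ch N) = ch N := by
        rw [← Option.some.inj hc]
        exact hstab (N+1) (by omega)
      have hs2 : (ch N).2 = 0 := vmove_fix hk hv
      -- invariant contradiction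
      have hdvd := (hphi N).dvd
      have hmodz : (k : ℤ) ∣ (c : ℤ) - (i : ℤ) := Nat.modEq_iff_dvd.mp hmod
      have hdvd2 : (k : ℤ) ∣ (((ch N).1 : ℕ) + 1 : ℤ) := by
        have : (((ch N).1 : ℕ) + 1 : ℤ) =
            (((i : ℤ) - c) - (((ch N).2 : ℤ) - ((ch N).1 : ℕ) - 1)) + ((c : ℤ) - i) := by
          rw [hs2]
          push_cast
          ring
        rw [this]
        exact dvd_add hdvd hmodz
      have hdvd3 : k ∣ ((ch N).1 : ℕ) + 1 := by exact_mod_cast hdvd2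
      have hle := Nat.le_of_dvd (by omega) hdvd3
      have := (ch N).1.isLt
      omega
    -- hence Verifier wins: color 0 occurs infinitely often
    refine Or.inr ⟨fun n => by rw [hch n]; rfl, ⟨fun _ => rfl, fun _ => ?_⟩⟩
    refine ⟨0, ?_, Even.zero, fun k' _ => Nat.zero_le k'⟩
    intro M
    refine ⟨max M N, le_max_left _ _, ch (max M N), hch _, ?_⟩
    rw [hstab _ (le_max_right M N)]
    unfold modGadget
    dsimp
    rw [if_pos hs1]

end Aux

/-- Verifier wins the `r ≡ c (mod k)` gadget from `(u_{(c-1) mod k}, i)`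
iff `i ≡ c (mod k)`. -/
theorem modGadget_correct (k : ℕ) (hk : 1 ≤ k) (c : ℕ) (i : ℕ) :
    (modGadget k hk).WinsFrom true
      (⟨(((c : ℤ) - 1) % (k : ℤ)).toNat, by
          have hk' : (0 : ℤ) < (k : ℤ) := by exact_mod_cast hk
          have h1 := Int.emod_nonneg ((c : ℤ) - 1) (by omega : (k : ℤ) ≠ 0)
          have h2 := Int.emod_lt_of_pos ((c : ℤ) - 1) hk'
          omega⟩, i) ↔ i ≡ c [MOD k] := by
  apply modGadget_aux
  show ((((((c : ℤ) - 1) % (k : ℤ)).toNat : ℕ)) : ℤ) = ((c : ℤ) - 1) % (k : ℤ)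
  exact Int.toNat_of_nonneg (Int.emod_nonneg _ (by exact_mod_cast Nat.one_le_iff_ne_zero.mp hk))

end OneCounter
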